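/- Let X and Y be countable equivalence-relation structures in the class C. Then X and Y are bi-condensable (each condenses onto the other) if and only if either both have all classes finite or both have some infinite class. In particular, C is partitioned into exactly two bi-condensability classes. -/

import Mathlib

/-- Membership in the class `C`: a countably infinite set with an equivalence
relation having infinitely many singleton classes and, for each `n`, a class
with at least `n` elements. -/
def InClassC {X : Type} (ρ : X → X → Prop) : Prop :=
  Countable X ∧ Infinite X ∧ Equivalence ρ ∧
  {x : X | ∀ y, ρ x y → y = x}.Infinite ∧
  ∀ n : ℕ, ∃ x : X, ∃ s : Finset X, n ≤ s.card ∧ ∀ y ∈ s, ρ x y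

/-- `X` condenses onto `Y`: there is a bijective homomorphism. -/
def Condenses {X Y : Type} (ρ : X → X → Prop) (σ : Y → Y → Prop) : Prop :=
  ∃ f : X → Y, Function.Bijective f ∧ ∀ a b : X, ρ a b → σ (f a) (f b)

/-- All equivalence classes are finite. -/
def AllClassesFinite {X : Type} (ρ : X → X → Prop) : Prop :=
  ∀ x : X, {y : X | ρ x y}.Finite


/-!
A condensation can only merge classes, so the image of an infinite class lies in an infinite
class. Conversely, isolated points of `X` impose no constraint: it suffices to map the other points
injectively and homomorphically into `Y`, leaving a complement that the isolated points fill
bijectively. If `Y` has an infinite class `D`, the non-isolated part of `X` (which then contains an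
infinite class) is sent onto `D`. If all classes are finite, each class of `X` is sent into its own,
larger class of `Y`, chosen among classes of strictly increasing size and using only every other
one, so that infinitely many classes of `Y` stay free.
-/

open Function Set

variable {X Y : Type} {ρ : X → X → Prop} {σ : Y → Y → Prop}

def isolatedPoints (ρ : X → X → Prop) : Set X := {x | ∀ y, ρ x y → y = x}

lemma Condenses.allClassesFinite (h : Condenses ρ σ) (hσ : AllClassesFinite σ) :
    AllClassesFinite ρ := by
  obtain ⟨f, hf, hhom⟩ := h
  intro x
  exact ((hσ (f x)).preimage hf.1.injOn).subset fun y hy => hhom x y hy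

lemma Equivalence.setOf_rel_eq (hσ : Equivalence σ) {a b : Y} (h : σ a b) : {z | σ a z} = {z | σ b z} :=
  ext fun _ => ⟨hσ.trans (hσ.symm h), hσ.trans h⟩

lemma Equivalence.setOf_rel_subset_compl_isolatedPoints (hρ : Equivalence ρ) {x : X}
    (hx : {y | ρ x y}.Infinite) : {y | ρ x y} ⊆ (isolatedPoints ρ)ᶜ := by
  intro z hxz hz
  refine hx ((finite_singleton z).subset fun w hxw => ?_)
  exact hz w (hρ.trans (hρ.symm hxz) hxw)

lemma condenses_of_injective_on_compl (hρ : Equivalence ρ) (hσ : Equivalence σ) {S : Set X}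
    (hS : S ⊆ isolatedPoints ρ) (g : ↥Sᶜ → Y) (hg : Injective g)
    (hhom : ∀ a b : ↥Sᶜ, ρ a b → σ (g a) (g b)) (e : S ≃ ↥(range g)ᶜ) : Condenses ρ σ := by
  classical
  let F : X ≃ Y := (Equiv.Set.sumCompl S).symm.trans <|
    ((e.sumCongr (Equiv.ofInjective g hg)).trans (Equiv.sumComm _ _)).trans
      (Equiv.Set.sumCompl (range g))
  have hF : ∀ x (hx : x ∉ S), F x = g ⟨x, hx⟩ := fun x hx => by
    simp [F, Equiv.Set.sumCompl_symm_apply_of_notMem hx]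
  refine ⟨F, F.bijective, fun a b hab => ?_⟩
  by_cases ha : a ∈ S
  · rw [hS ha b hab]
    exact hσ.refl _
  · have hb : b ∉ S := fun hb => ha (hS hb a (hρ.symm hab) ▸ hb)
    rw [hF a ha, hF b hb]
    exact hhom ⟨a, ha⟩ ⟨b, hb⟩ hab

lemma condenses_of_injective_infinite_compl_range [Countable X] [Countable Y]
    (hρ : Equivalence ρ) (hσ : Equivalence σ) (hiso : (isolatedPoints ρ).Infinite)
    {G : X → Y} (hG : Injective G) (hhom : ∀ a b, ρ a b → σ (G a) (G b))
    (hcorange : (range G)ᶜ.Infinite) : Condenses ρ σ := by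
  let g : ↥(isolatedPoints ρ)ᶜ → Y := G ∘ Subtype.val
  have : Infinite ↥(isolatedPoints ρ) := hiso.to_subtype
  have : Infinite ↥(range g)ᶜ :=
    (hcorange.mono (compl_subset_compl.2 (range_comp_subset_range _ _))).to_subtype
  obtain ⟨e⟩ : Nonempty (isolatedPoints ρ ≃ ↥(range g)ᶜ) := nonempty_equiv_of_countable
  exact condenses_of_injective_on_compl hρ hσ subset_rfl g (hG.comp Subtype.val_injective)
    (fun a b => hhom a b) e

lemma Set.Infinite.exists_subset_equiv {s : Set X} (hs : s.Infinite) (β : Type) [Countable β] :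
    ∃ t ⊆ s, Nonempty (t ≃ β) := by
  obtain ⟨f, hf⟩ := Countable.exists_injective_nat β
  let h : β → X := Subtype.val ∘ hs.natEmbedding s ∘ f
  have hh : Injective h := Subtype.val_injective.comp ((hs.natEmbedding s).injective.comp hf)
  exact ⟨range h, range_subset_iff.2 fun b => (hs.natEmbedding s (f b)).2,
    ⟨(Equiv.ofInjective h hh).symm⟩⟩

lemma condenses_of_not_allClassesFinite [Countable X] [Countable Y]
    (hρ : Equivalence ρ) (hσ : Equivalence σ) (hiso : (isolatedPoints ρ).Infinite)
    (hX : ¬ AllClassesFinite ρ) (hY : ¬ AllClassesFinite σ) : Condenses ρ σ := by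
  obtain ⟨x₀, hx₀ : {y | ρ x₀ y}.Infinite⟩ := not_forall.1 hX
  obtain ⟨y₀, hy₀ : {y | σ y₀ y}.Infinite⟩ := not_forall.1 hY
  obtain ⟨S, hS, ⟨e₁⟩⟩ := hiso.exists_subset_equiv ↥{y | σ y₀ y}ᶜ
  have : Infinite ↥Sᶜ := (hx₀.mono ((hρ.setOf_rel_subset_compl_isolatedPoints hx₀).trans
    (compl_subset_compl.2 hS))).to_subtype
  have : Infinite ↥{y | σ y₀ y} := hy₀.to_subtype
  obtain ⟨e₂⟩ : Nonempty (↥Sᶜ ≃ {y | σ y₀ y}) := nonempty_equiv_of_countable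
  have hrange : range (Subtype.val ∘ e₂) = {y | σ y₀ y} := by
    rw [range_comp, e₂.range_eq_univ, image_univ, Subtype.range_coe]
  refine condenses_of_injective_on_compl hρ hσ hS (Subtype.val ∘ e₂)
    (Subtype.val_injective.comp e₂.injective) (fun a b _ => ?_) (e₁.trans (Equiv.setCongr ?_))
  · exact hσ.trans (hσ.symm (e₂ a).2) (e₂ b).2
  · rw [hrange]

lemma exists_strictMono_comp_of_unbounded {α : Type} {f : α → ℕ} (hf : ∀ n, ∃ a, n ≤ f a) :
    ∃ y : ℕ → α, StrictMono (f ∘ y) := by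
  have hinf : (range f).Infinite := infinite_of_not_bddAbove fun ⟨b, hb⟩ => by
    obtain ⟨a, ha⟩ := hf (b + 1)
    exact absurd (hb (mem_range_self a)) (by omega)
  choose y hy using fun m => Nat.nth_mem_of_infinite hinf m
  refine ⟨y, fun m m' h => ?_⟩
  simpa only [comp_apply, hy] using Nat.nth_strictMono hinf h

/-- Each class `q` of `X` goes into the class of `y (j q)`, with `j` odd, injective and
`j q ≥ |q|`; the classes of the `y (2 * m)` stay outside the range. -/
lemma exists_injective_infinite_compl_range [Countable X]
    (hρ : Equivalence ρ) (hσ : Equivalence σ) (hfin : AllClassesFinite ρ) {y : ℕ → Y}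
    (hy : StrictMono fun m => {z | σ (y m) z}.ncard) :
    ∃ G : X → Y, Injective G ∧ (∀ a b, ρ a b → σ (G a) (G b)) ∧ (range G)ᶜ.Infinite := by
  let s : Setoid X := ⟨ρ, hρ⟩
  have : Nonempty Y := ⟨y 0⟩
  have hsep : ∀ m m', σ (y m) (y m') → m = m' := fun m m' h =>
    hy.injective (by simp only [hσ.setOf_rel_eq h])
  obtain ⟨k, hk⟩ := Countable.exists_injective_nat (Quotient s)
  let cls : Quotient s → Set X := fun q => {x | ⟦x⟧ = q}
  have hcls_fin : ∀ q, (cls q).Finite := fun q => by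
    obtain ⟨x, rfl⟩ := Quotient.exists_rep q
    exact (hfin x).subset fun z hz => hρ.symm (Quotient.exact hz)
  let j : Quotient s → ℕ := fun q => 2 * Nat.pair (cls q).ncard (k q) + 1
  have hj : Injective j := fun q q' h => hk (Nat.pair_eq_pair.1 (by simpa [j] using h)).2
  have hj_ge : ∀ q, (cls q).ncard < j q := fun q =>
    (Nat.left_le_pair _ (k q)).trans_lt (by simp only [j]; omega)
  have hemb : ∀ q, ∃ h : X → Y, cls q ⊆ h ⁻¹' {z | σ (y (j q)) z} ∧ InjOn h (cls q) := by
    intro q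
    have hlt : (cls q).ncard < {z | σ (y (j q)) z}.ncard := (hj_ge q).trans_le (hy.id_le (j q))
    refine (hcls_fin q).exists_injOn_of_encard_le ?_
    rw [← (hcls_fin q).cast_ncard_eq, ← (finite_of_ncard_pos (by omega)).cast_ncard_eq]
    exact_mod_cast hlt.le
  choose h hmaps hinj using hemb
  let G : X → Y := fun x => h ⟦x⟧ x
  have hG : ∀ x, σ (y (j ⟦x⟧)) (G x) := fun x => hmaps ⟦x⟧ rfl
  refine ⟨G, fun a b hab => ?_, fun a b hab => ?_, ?_⟩
  · have hq : ⟦a⟧ = ⟦b⟧ := hj (hsep _ _ (hσ.trans (hG a) (hab ▸ hσ.symm (hG b))))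
    exact hinj ⟦a⟧ rfl hq.symm (hab.trans (by simp only [G, hq]))
  · have hq : ⟦a⟧ = ⟦b⟧ := Quotient.sound hab
    exact hσ.trans (hσ.symm (hG a)) (hq ▸ hG b)
  · have hy_inj : Injective y := fun m m' h => hsep m m' (by rw [h]; exact hσ.refl _)
    refine (infinite_range_of_injective (hy_inj.comp (mul_right_injective₀ two_ne_zero))).mono ?_
    rintro _ ⟨m, rfl⟩ ⟨x, hx : G x = y (2 * m)⟩
    have hodd : j ⟦x⟧ = 2 * m := hsep _ _ (hx ▸ hG x)
    simp only [j] at hodd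
    omega

lemma InClassC.exists_le_ncard (hY : InClassC σ) (hfY : AllClassesFinite σ) (n : ℕ) :
    ∃ y, n ≤ {z | σ y z}.ncard := by
  obtain ⟨y, s, hn, hs⟩ := hY.2.2.2.2 n
  exact ⟨y, hn.trans ((ncard_coe_finset s).symm.le.trans (ncard_le_ncard hs (hfY y)))⟩

lemma InClassC.condenses_of_allClassesFinite (hX : InClassC ρ) (hY : InClassC σ)
    (hfX : AllClassesFinite ρ) (hfY : AllClassesFinite σ) : Condenses ρ σ := by
  obtain ⟨y, hy⟩ := exists_strictMono_comp_of_unbounded (hY.exists_le_ncard hfY)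
  obtain ⟨_, -, hρ, hiso, -⟩ := hX
  obtain ⟨_, -, hσ, -, -⟩ := hY
  obtain ⟨G, hG, hhom, hcorange⟩ := exists_injective_infinite_compl_range hρ hσ hfX hy
  exact condenses_of_injective_infinite_compl_range hρ hσ hiso hG hhom hcorange

lemma InClassC.condenses_of_not_allClassesFinite (hX : InClassC ρ) (hY : InClassC σ)
    (hfX : ¬ AllClassesFinite ρ) (hfY : ¬ AllClassesFinite σ) : Condenses ρ σ := by
  obtain ⟨_, -, hρ, hiso, -⟩ := hX
  obtain ⟨_, -, hσ, -, -⟩ := hY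
  exact _root_.condenses_of_not_allClassesFinite hρ hσ hiso hfX hfY

theorem stmt_19 {X Y : Type} (ρ : X → X → Prop) (σ : Y → Y → Prop)
    (hX : InClassC ρ) (hY : InClassC σ) :
    (Condenses ρ σ ∧ Condenses σ ρ) ↔
      ((AllClassesFinite ρ ∧ AllClassesFinite σ) ∨
        (¬ AllClassesFinite ρ ∧ ¬ AllClassesFinite σ)) := by
  constructor
  · rintro ⟨hXY, hYX⟩
    have := hXY.allClassesFinite
    have := hYX.allClassesFinite
    tauto
  · rintro (⟨hfX, hfY⟩ | ⟨hfX, hfY⟩)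
    · exact ⟨hX.condenses_of_allClassesFinite hY hfX hfY,
        hY.condenses_of_allClassesFinite hX hfY hfX⟩
    · exact ⟨hX.condenses_of_not_allClassesFinite hY hfX hfY,
        hY.condenses_of_not_allClassesFinite hX hfY hfX⟩
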